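/- arXiv:0811.3390 — 2 statements merged into one kernel-verified Lean document; each statement's English description precedes it below -/
import Mathlib

section
/- Let a and b be coprime integers with 0 < a < b, let β ∈ ℂ, fix k ∈ {0,1,…,a−1} with (β − bk)/a ∉ ℕ, and let s be a real number with 1 ≤ s < b/a. Define c_m = ((β − bk)/a)_{bm} · k! / (k + am)! for m ∈ ℕ. Then for all C, D > 0 there exists m ∈ ℕ with |c_m| > C · D^m · ((a·m)!)^{s−1}. (Hence the Gevrey index of the Γ-series φ_{v^k} along x₂ = 0 at a point (ε,0) with ε ≠ 0 is exactly b/a.) -/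
/-!
Write `z = (β - bk)/a`. Since `z ∉ ℕ`, the first `N` factors of `(z)_n` are nonzero, and
once `N ≥ re z + 1` the remaining factors satisfy `‖z - N - i‖ ≥ i + 1`; hence `(z)_n` grows
at least like `ε (n - N)! ≥ ε n^n / (e^n n^N)`. With `x = bm`, the factorials `(am)!^(s-1)`
and `(k+am)!` are at most `x^(am(s-1))` and `x^(k+am)`, so the claim reduces to `x^(bm)`
eventually beating `C' E^m x^(asm+K)`, which holds because `as < b`.
-/

open Filter Polynomial Nat

theorem factorial_le_norm_descPochhammer_eval {z : ℂ} (hz : z.re ≤ -1) (n : ℕ) :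
    (n ! : ℝ) ≤ ‖(descPochhammer ℂ n).eval z‖ := by
  rw [descPochhammer_eval_eq_prod_range, norm_prod, ← Finset.prod_range_add_one_eq_factorial]
  push_cast
  refine Finset.prod_le_prod (fun i _ => by positivity) fun i _ => ?_
  calc (i : ℝ) + 1 ≤ -(z - i).re := by rw [Complex.sub_re, Complex.natCast_re]; linarith
    _ ≤ ‖z - i‖ := (neg_le_abs _).trans (Complex.abs_re_le_norm _)

theorem descPochhammer_eval_add {R : Type*} [CommRing R] (z : R) (N j : ℕ) :
    (descPochhammer R (N + j)).eval z =
      (descPochhammer R N).eval z * (descPochhammer R j).eval (z - N) := by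
  rw [← descPochhammer_mul, eval_mul, eval_comp, eval_sub, eval_X, eval_natCast]

theorem Nat.factorial_add_le_factorial_mul_pow (N j : ℕ) : (N + j)! ≤ j ! * (N + j) ^ N := by
  rw [← factorial_mul_descFactorial (Nat.le_add_right N j), Nat.add_sub_cancel_left]
  exact Nat.mul_le_mul_left _ (descFactorial_le_pow _ _)

theorem pow_self_le_exp_mul_factorial (n : ℕ) : (n : ℝ) ^ n ≤ Real.exp n * n ! := by
  rw [← div_le_iff₀ (by positivity)]
  exact Real.pow_div_factorial_le_exp _ n.cast_nonneg n

theorem exists_pos_mul_pow_self_le_norm_descPochhammer_eval {z : ℂ} (hz : ∀ n : ℕ, z ≠ n) :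
    ∃ ε > 0, ∃ N : ℕ, ∀ n ≥ N, ε * (n : ℝ) ^ n ≤ Real.exp n * (n : ℝ) ^ N *
      ‖(descPochhammer ℂ n).eval z‖ := by
  obtain ⟨N, hN⟩ : ∃ N : ℕ, z.re + 1 ≤ N :=
    ⟨⌈z.re⌉₊ + 1, by push_cast; linarith [le_ceil z.re]⟩
  have hre : (z - N).re ≤ -1 := by rw [Complex.sub_re, Complex.natCast_re]; linarith
  refine ⟨‖(descPochhammer ℂ N).eval z‖, norm_pos_iff.2 ?_, N, fun n hn => ?_⟩
  · rw [descPochhammer_eval_eq_prod_range, Finset.prod_ne_zero_iff]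
    exact fun j _ => sub_ne_zero.2 (hz j)
  obtain ⟨j, rfl⟩ := Nat.exists_eq_add_of_le hn
  rw [descPochhammer_eval_add, norm_mul]
  set n := N + j
  calc ‖(descPochhammer ℂ N).eval z‖ * (n : ℝ) ^ n
      ≤ ‖(descPochhammer ℂ N).eval z‖ * (Real.exp n * n !) := by
        gcongr; exact pow_self_le_exp_mul_factorial n
    _ ≤ ‖(descPochhammer ℂ N).eval z‖ * (Real.exp n * (j ! * (n : ℝ) ^ N)) := by
        gcongr; exact_mod_cast factorial_add_le_factorial_mul_pow N j
    _ ≤ ‖(descPochhammer ℂ N).eval z‖ *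
          (Real.exp n * (‖(descPochhammer ℂ j).eval (z - N)‖ * (n : ℝ) ^ N)) := by
        gcongr; exact factorial_le_norm_descPochhammer_eval hre j
    _ = _ := by ring

theorem factorial_le_rpow {n : ℕ} {x : ℝ} (hx : (n : ℝ) ≤ x) :
    (n ! : ℝ) ≤ x ^ (n : ℝ) := by
  rw [Real.rpow_natCast]
  calc (n ! : ℝ) ≤ (n : ℝ) ^ n := by exact_mod_cast factorial_le_pow n
    _ ≤ x ^ n := by gcongr

theorem factorial_rpow_mul_factorial_le {p n : ℕ} {x t : ℝ} (hpn : p ≤ n)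
    (hx : (n : ℝ) ≤ x) (hx0 : 0 < x) (ht : 0 ≤ t) :
    (p ! : ℝ) ^ t * n ! ≤ x ^ (p * t + n) := by
  have hpx : (p : ℝ) ≤ x := (cast_le.2 hpn).trans hx
  calc (p ! : ℝ) ^ t * n ! ≤ (x ^ (p : ℝ)) ^ t * x ^ (n : ℝ) := by
        gcongr
        exacts [factorial_le_rpow hpx, factorial_le_rpow hx]
    _ = x ^ (p * t + n) := by
        rw [← Real.rpow_mul hx0.le, ← Real.rpow_add hx0]

theorem eventually_mul_pow_mul_rpow_lt_rpow {p q c : ℝ} (hpq : p < q) (hc : 1 ≤ c) (A K : ℝ)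
    {E : ℝ} (hE : 0 ≤ E) :
    ∀ᶠ m : ℕ in atTop, A * E ^ m * (c * m) ^ (p * m + K) < (c * m) ^ (q * m) := by
  have hδ : 0 < (q - p) / 2 := by linarith
  have h1 : ∀ᶠ m : ℕ in atTop, 2 * E < (m : ℝ) ^ ((q - p) / 2) :=
    ((tendsto_rpow_atTop hδ).comp tendsto_natCast_atTop_atTop).eventually_gt_atTop _
  have h2 : ∀ᶠ m : ℕ in atTop, A ≤ 2 ^ m :=
    (tendsto_pow_atTop_atTop_of_one_lt one_lt_two).eventually_ge_atTop A
  have h3 : ∀ᶠ m : ℕ in atTop, K ≤ (q - p) / 2 * m :=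
    (tendsto_natCast_atTop_atTop.const_mul_atTop hδ).eventually_ge_atTop K
  filter_upwards [h1, h2, h3, eventually_gt_atTop 0] with m h1 h2 h3 hm
  have hm1 : (1 : ℝ) ≤ m := by exact_mod_cast hm
  have hcm : (m : ℝ) ≤ c * m := le_mul_of_one_le_left (by positivity) hc
  calc A * E ^ m * (c * m) ^ (p * m + K) ≤ (2 * E) ^ m * (c * m) ^ (p * m + K) := by
        rw [mul_pow]; gcongr
    _ < ((m : ℝ) ^ ((q - p) / 2)) ^ m * (c * m) ^ (p * m + K) := by
        gcongr
    _ ≤ (c * m) ^ ((q - p) / 2 * m) * (c * m) ^ (p * m + K) := by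
        rw [← Real.rpow_mul_natCast (by positivity)]
        gcongr
    _ = (c * m) ^ ((q - p) / 2 * m + (p * m + K)) := (Real.rpow_add (by linarith) _ _).symm
    _ ≤ (c * m) ^ (q * m) := Real.rpow_le_rpow_of_exponent_le (by linarith) (by linarith)

theorem gamma_series_coeff_not_gevrey_below_slope_general
    (a b : ℕ) (ha : 0 < a) (haltb : a < b)
    (β : ℂ) (k : ℕ)
    (hβ : ∀ n : ℕ, (β - (b : ℂ) * (k : ℂ)) / (a : ℂ) ≠ (n : ℂ))
    (s : ℝ) (hs1 : 1 ≤ s) (hs2 : s < (b : ℝ) / (a : ℝ))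
    (c : ℕ → ℂ)
    (hc : ∀ m : ℕ, c m =
      (descPochhammer ℂ (b * m)).eval ((β - (b : ℂ) * (k : ℂ)) / (a : ℂ))
        * (k.factorial : ℂ) / ((k + a * m).factorial : ℂ)) :
    ∀ C D : ℝ, 0 < C → 0 < D →
      ∃ m : ℕ, C * D ^ m * (((a * m).factorial : ℝ)) ^ (s - 1) < ‖c m‖ := by
  intro C D hC hD
  set z : ℂ := (β - b * k) / a
  obtain ⟨ε, hε, N, hpoch⟩ := exists_pos_mul_pow_self_le_norm_descPochhammer_eval hβ
  have has : (a : ℝ) * s < b := by rwa [lt_div_iff₀ (by positivity), mul_comm] at hs2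
  have hb : (1 : ℝ) ≤ b := by exact_mod_cast ha.trans haltb
  obtain ⟨m, hgrowth, hmN, hmk, hm⟩ :=
    ((eventually_mul_pow_mul_rpow_lt_rpow has hb (C / (ε * k !)) (k + N)
      (E := D * Real.exp b) (by positivity)).and ((eventually_ge_atTop N).and
      ((eventually_ge_atTop k).and (eventually_gt_atTop 0)))).exists
  refine ⟨m, ?_⟩
  set x : ℝ := b * m
  have hx : 0 < x := by positivity
  have hfact : (((a * m)! : ℕ) : ℝ) ^ (s - 1) * (k + a * m)! ≤ x ^ (a * s * m + k) := by
    convert factorial_rpow_mul_factorial_le (Nat.le_add_left (a * m) k) ?_ hx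
      (sub_nonneg.2 hs1) using 2
    · push_cast; ring
    · simp only [x]; exact_mod_cast (show k + a * m ≤ b * m by nlinarith)
  have hbm :
      ε * x ^ (b * m) ≤ Real.exp x * x ^ N * ‖(descPochhammer ℂ (b * m)).eval z‖ := by
    simpa using hpoch (b * m) (hmN.trans (Nat.le_mul_of_pos_left m (ha.trans haltb)))
  have hexp : Real.exp x = Real.exp b ^ m := by rw [← Real.exp_nat_mul, mul_comm]
  rw [hc, norm_div, norm_mul, Complex.norm_natCast, Complex.norm_natCast,
    lt_div_iff₀ (by positivity)]
  refine lt_of_mul_lt_mul_right ?_ (by positivity : 0 ≤ Real.exp x * x ^ N)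
  calc C * D ^ m * (((a * m)! : ℕ) : ℝ) ^ (s - 1) * (k + a * m)! * (Real.exp x * x ^ N)
      ≤ C * D ^ m * x ^ (a * s * m + k) * (Real.exp x * x ^ N) := by
        rw [mul_assoc (C * D ^ m)]; gcongr
    _ = ε * k ! * (C / (ε * k !) * (D * Real.exp b) ^ m * x ^ (a * s * m + (k + N))) := by
        rw [← add_assoc, Real.rpow_add hx _ N, Real.rpow_natCast, mul_pow D, hexp]
        field_simp
    _ < ε * k ! * x ^ (b * m : ℝ) := by gcongr
    _ = k ! * (ε * x ^ (b * m)) := by rw [← cast_mul, Real.rpow_natCast]; ring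
    _ ≤ k ! * (Real.exp x * x ^ N * ‖(descPochhammer ℂ (b * m)).eval z‖) := by gcongr
    _ = _ := by ring

/-- For coprime `0 < a < b`, `β ∈ ℂ`, `k ∈ {0,…,a-1}` with `(β - bk)/a ∉ ℕ`, and a real
`1 ≤ s < b/a`, the coefficients `c_m = ((β - bk)/a)_{bm} · k! / (k + am)!` of the Γ-series
`φ_{v^k}` violate every Gevrey bound of order `s`: for all `C, D > 0` there is `m` with
`|c_m| > C · D^m · ((a·m)!)^{s-1}`. Hence the Gevrey index of `φ_{v^k}` is exactly `b/a`. -/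
theorem gamma_series_coeff_not_gevrey_below_slope
    (a b : ℕ) (hab : Nat.Coprime a b) (ha : 0 < a) (haltb : a < b)
    (β : ℂ) (k : ℕ) (hk : k < a)
    (hβ : ∀ n : ℕ, (β - (b : ℂ) * (k : ℂ)) / (a : ℂ) ≠ (n : ℂ))
    (s : ℝ) (hs1 : 1 ≤ s) (hs2 : s < (b : ℝ) / (a : ℝ))
    (c : ℕ → ℂ)
    (hc : ∀ m : ℕ, c m =
      (descPochhammer ℂ (b * m)).eval ((β - (b : ℂ) * (k : ℂ)) / (a : ℂ))
        * (k.factorial : ℂ) / ((k + a * m).factorial : ℂ)) :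
    ∀ C D : ℝ, 0 < C → 0 < D →
      ∃ m : ℕ, C * D ^ m * (((a * m).factorial : ℝ)) ^ (s - 1) < ‖c m‖ :=
  gamma_series_coeff_not_gevrey_below_slope_general a b ha haltb β k hβ s hs1 hs2 c hc
end

section
/- Let a and b be coprime integers with 0 < a < b, β ∈ ℂ, and ε ∈ ℂ with ε ≠ 0. Every f ∈ ℂ[[t₁,x₂]] with P f = 0 and E_p f = 0 is Gevrey of order b/a, i.e. there exist C, R > 0 with |f_{(i,j)}| ≤ C·R^{i+j}·(j!)^{b/a − 1} for all i, j. Consequently, for every real s ≥ b/a, the ℂ-vector space of Gevrey-order-s solutions {f Gevrey of order s : P f = E_p f = 0} has dimension a. -/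
noncomputable section

abbrev M2 : Type := MvPowerSeries (Fin 2) ℂ

/-- Coefficient `f_{(i,j)}` of a formal power series `f ∈ ℂ[[x₁,x₂]]`. -/
def co (f : M2) (i j : ℕ) : ℂ :=
  MvPowerSeries.coeff (Finsupp.single (0 : Fin 2) i + Finsupp.single (1 : Fin 2) j) f

/-- A coefficient family `F` is Gevrey of order `s` along `x₂ = 0`:
`|F i j| ≤ C·R^(i+j)·(j!)^(s-1)` for some `C, R > 0`. -/
def GevreyFn (s : ℝ) (F : ℕ → ℕ → ℂ) : Prop :=
  ∃ C R : ℝ, 0 < C ∧ 0 < R ∧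
    ∀ i j : ℕ, ‖F i j‖ ≤ C * R ^ (i + j) * (j.factorial : ℝ) ^ (s - 1)

/-- A coefficient family is convergent iff it is Gevrey of order `1`, i.e.
`|F i j| ≤ C·R^(i+j)` for some `C, R > 0`. -/
def ConvFn (F : ℕ → ℕ → ℂ) : Prop := GevreyFn 1 F

/-- Coefficients of `P f` where `P = ∂₁^b - ∂₂^a`:
`(P f)_{(i,j)} = ((i+b)!/i!)·f_{(i+b,j)} - ((j+a)!/j!)·f_{(i,j+a)}`. -/
def Pco (a b : ℕ) (f : M2) (i j : ℕ) : ℂ :=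
  (((i + b).factorial / i.factorial : ℕ) : ℂ) * co f (i + b) j
    - (((j + a).factorial / j.factorial : ℕ) : ℂ) * co f i (j + a)

/-- Coefficients of `E f` where `E = a·x₁∂₁ + b·x₂∂₂ - β`:
`(E f)_{(i,j)} = (a·i + b·j - β)·f_{(i,j)}`. -/
def Eco (a b : ℕ) (β : ℂ) (f : M2) (i j : ℕ) : ℂ :=
  (((a * i + b * j : ℕ) : ℂ) - β) * co f i j

/-- Coefficients of `E_p f` where `E_p = a·(t₁+ε)∂₁ + b·x₂∂₂ - β`:
`(E_p f)_{(i,j)} = (a·i + b·j - β)·f_{(i,j)} + a·ε·(i+1)·f_{(i+1,j)}`. -/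
def Epco (a b : ℕ) (β ε : ℂ) (f : M2) (i j : ℕ) : ℂ :=
  (((a * i + b * j : ℕ) : ℂ) - β) * co f i j + (a : ℂ) * ε * ((i : ℂ) + 1) * co f (i + 1) j

lemma co_add (f g : M2) (i j : ℕ) : co (f + g) i j = co f i j + co g i j := by simp [co]

lemma co_smul (c : ℂ) (f : M2) (i j : ℕ) : co (c • f) i j = c * co f i j := by simp [co]

lemma co_zero (i j : ℕ) : co (0 : M2) i j = 0 := by simp [co]

lemma gevreyFn_zero {s : ℝ} : GevreyFn s fun _ _ => (0 : ℂ) :=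
  ⟨1, 1, one_pos, one_pos, by intro i j; simp; positivity⟩

lemma gevreyFn_add {s : ℝ} {F G : ℕ → ℕ → ℂ} (hF : GevreyFn s F) (hG : GevreyFn s G) :
    GevreyFn s fun i j => F i j + G i j := by
  obtain ⟨C, R, hC, hR, h⟩ := hF
  obtain ⟨C', R', hC', hR', h'⟩ := hG
  refine ⟨C + C', max R R', by positivity, lt_of_lt_of_le hR (le_max_left _ _), fun i j => ?_⟩
  have h1 := h i j
  have h2 := h' i j
  have hRm : R ^ (i + j) ≤ (max R R') ^ (i + j) := pow_le_pow_left₀ hR.le (le_max_left _ _) _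
  have hRm' : R' ^ (i + j) ≤ (max R R') ^ (i + j) := pow_le_pow_left₀ hR'.le (le_max_right _ _) _
  have hfac : (0 : ℝ) ≤ (j.factorial : ℝ) ^ (s - 1) := by positivity
  calc ‖F i j + G i j‖ ≤ ‖F i j‖ + ‖G i j‖ :=
        norm_add_le _ _
    _ ≤ C * R ^ (i + j) * (j.factorial : ℝ) ^ (s - 1)
        + C' * R' ^ (i + j) * (j.factorial : ℝ) ^ (s - 1) := add_le_add h1 h2
    _ ≤ C * (max R R') ^ (i + j) * (j.factorial : ℝ) ^ (s - 1)
        + C' * (max R R') ^ (i + j) * (j.factorial : ℝ) ^ (s - 1) := by gcongr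
    _ = (C + C') * (max R R') ^ (i + j) * (j.factorial : ℝ) ^ (s - 1) := by ring

lemma gevreyFn_smul {s : ℝ} (c : ℂ) {F : ℕ → ℕ → ℂ} (hF : GevreyFn s F) :
    GevreyFn s fun i j => c * F i j := by
  obtain ⟨C, R, hC, hR, h⟩ := hF
  refine ⟨(‖c‖ + 1) * C, R, by positivity, hR, fun i j => ?_⟩
  have h1 := h i j
  calc ‖c * F i j‖ = ‖c‖ * ‖F i j‖ := by simp [map_mul]
    _ ≤ (‖c‖ + 1) * (C * R ^ (i + j) * (j.factorial : ℝ) ^ (s - 1)) := by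
        apply mul_le_mul (by linarith) h1 (norm_nonneg _) (by positivity)
    _ = (‖c‖ + 1) * C * R ^ (i + j) * (j.factorial : ℝ) ^ (s - 1) := by ring

lemma gevreyFn_co_add {s : ℝ} {f g : M2} (hf : GevreyFn s (co f)) (hg : GevreyFn s (co g)) :
    GevreyFn s (co (f + g)) := by
  have : co (f + g) = fun i j => co f i j + co g i j := by funext i j; exact co_add f g i j
  rw [this]; exact gevreyFn_add hf hg

lemma gevreyFn_co_smul {s : ℝ} (c : ℂ) {f : M2} (hf : GevreyFn s (co f)) :
    GevreyFn s (co (c • f)) := by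
  have : co (c • f) = fun i j => c * co f i j := by funext i j; exact co_smul c f i j
  rw [this]; exact gevreyFn_smul c hf

lemma gevreyFn_co_zero {s : ℝ} : GevreyFn s (co (0 : M2)) := by
  have : co (0 : M2) = fun _ _ => (0 : ℂ) := by funext i j; exact co_zero i j
  rw [this]; exact gevreyFn_zero

lemma pco_add (a b : ℕ) (f g : M2) (i j : ℕ) :
    Pco a b (f + g) i j = Pco a b f i j + Pco a b g i j := by
  simp only [Pco, co_add]; ring

lemma pco_smul (a b : ℕ) (c : ℂ) (f : M2) (i j : ℕ) :
    Pco a b (c • f) i j = c * Pco a b f i j := by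
  simp only [Pco, co_smul]; ring

lemma pco_zero (a b : ℕ) (i j : ℕ) : Pco a b (0 : M2) i j = 0 := by
  simp [Pco, co_zero]

lemma eco_add (a b : ℕ) (β : ℂ) (f g : M2) (i j : ℕ) :
    Eco a b β (f + g) i j = Eco a b β f i j + Eco a b β g i j := by
  simp only [Eco, co_add]; ring

lemma eco_smul (a b : ℕ) (β : ℂ) (c : ℂ) (f : M2) (i j : ℕ) :
    Eco a b β (c • f) i j = c * Eco a b β f i j := by
  simp only [Eco, co_smul]; ring

lemma eco_zero (a b : ℕ) (β : ℂ) (i j : ℕ) : Eco a b β (0 : M2) i j = 0 := by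
  simp [Eco, co_zero]

lemma epco_add (a b : ℕ) (β ε : ℂ) (f g : M2) (i j : ℕ) :
    Epco a b β ε (f + g) i j = Epco a b β ε f i j + Epco a b β ε g i j := by
  simp only [Epco, co_add]; ring

lemma epco_smul (a b : ℕ) (β ε : ℂ) (c : ℂ) (f : M2) (i j : ℕ) :
    Epco a b β ε (c • f) i j = c * Epco a b β ε f i j := by
  simp only [Epco, co_smul]; ring

lemma epco_zero (a b : ℕ) (β ε : ℂ) (i j : ℕ) : Epco a b β ε (0 : M2) i j = 0 := by
  simp [Epco, co_zero]

/-- The space of Gevrey-order-`s` solutions of the hypergeometric system at `p = (ε,0)`. -/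
def GSolP (a b : ℕ) (β ε : ℂ) (s : ℝ) : Submodule ℂ M2 where
  carrier := {f | GevreyFn s (co f) ∧ (∀ i j : ℕ, Pco a b f i j = 0) ∧
    ∀ i j : ℕ, Epco a b β ε f i j = 0}
  add_mem' := by
    rintro f g ⟨hf0, hf1, hf2⟩ ⟨hg0, hg1, hg2⟩
    exact ⟨gevreyFn_co_add hf0 hg0,
      fun i j => by rw [pco_add, hf1 i j, hg1 i j, add_zero],
      fun i j => by rw [epco_add, hf2 i j, hg2 i j, add_zero]⟩
  zero_mem' := ⟨gevreyFn_co_zero, fun i j => pco_zero a b i j, fun i j => epco_zero a b β ε i j⟩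
  smul_mem' := by
    rintro c f ⟨hf0, hf1, hf2⟩
    exact ⟨gevreyFn_co_smul c hf0,
      fun i j => by rw [pco_smul, hf1 i j, mul_zero],
      fun i j => by rw [epco_smul, hf2 i j, mul_zero]⟩

/-!
The operator `E_p` is a first-order recursion in `i` with leading coefficient `a ε (i + 1) ≠ 0`,
so a solution satisfies `f_{i,j} = r_j(i) f_{0,j}` for an explicit product `r_j(i)`. The equation
`P f = 0` at `i = 0` then gives `f_{0,j+a} = κ_j f_{0,j}`, so a solution is determined by
`f_{0,0}, …, f_{0,a-1}`; conversely every such datum extends to a solution, because the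
factors of `r_j` shifted by `b` are those of `r_{j+a}`.

For the Gevrey bound, `|r_j(i)| ≤ e^{ai + bj + |β|} / (a|ε|)^i` and `|κ_j| ≤ K (j+1)^{b-a}`.
Iterating the second estimate in steps of `a` gives `|f_{0,j}| ≤ C R^j (j!)^{(b-a)/a}`, since
`(j+1)^a j! ≤ (j+a)!`.
-/

open Finset
open scoped Nat

lemma Nat.succ_pow_le_factorial_div_factorial (j a : ℕ) : (j + 1) ^ a ≤ (j + a)! / j ! := by
  rw [← Nat.ascFactorial_eq_div]
  exact Nat.pow_succ_le_ascFactorial _ _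

lemma factorial_div_factorial_ne_zero (j a : ℕ) : (((j + a)! / j ! : ℕ) : ℂ) ≠ 0 :=
  Nat.cast_ne_zero.2
    ((pow_pos j.succ_pos a).trans_le (Nat.succ_pow_le_factorial_div_factorial j a)).ne'

lemma succ_pow_mul_factorial_rpow_le {a : ℕ} (ha : 0 < a) (c k : ℕ) :
    ((k : ℝ) + 1) ^ c * (k ! : ℝ) ^ ((c : ℝ) / a) ≤ ((k + a)! : ℝ) ^ ((c : ℝ) / a) := by
  have hpow : ((k : ℝ) + 1) ^ c = (((k : ℝ) + 1) ^ a) ^ ((c : ℝ) / a) := by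
    rw [← Real.rpow_natCast _ a, ← Real.rpow_mul (by positivity),
      mul_div_cancel₀ _ (by positivity), Real.rpow_natCast]
  rw [hpow, ← Real.mul_rpow (by positivity) (by positivity)]
  gcongr
  rw [mul_comm]
  exact_mod_cast Nat.factorial_mul_pow_le_factorial

lemma exists_le_mul_pow_mul_factorial_rpow {M : ℕ → ℝ} {a c : ℕ} {K : ℝ} (ha : 0 < a)
    (hM : ∀ j, 0 ≤ M j) (hstep : ∀ j, M (j + a) ≤ K * ((j : ℝ) + 1) ^ c * M j) :
    ∃ C R : ℝ, 0 < C ∧ 0 < R ∧ ∀ j, M j ≤ C * R ^ j * (j ! : ℝ) ^ ((c : ℝ) / a) := by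
  set R := max K 1
  set C := 1 + ∑ k ∈ range a, M k
  have hR : 1 ≤ R := le_max_right _ _
  have hC : 1 ≤ C := le_add_of_nonneg_right (sum_nonneg fun k _ => hM k)
  have hKR : K ≤ R ^ a := (le_max_left K 1).trans (le_self_pow₀ hR ha.ne')
  refine ⟨C, R, by positivity, by positivity, fun j => ?_⟩
  induction j using Nat.strong_induction_on with
  | _ j ih =>
    obtain hj | ⟨k, rfl⟩ : j < a ∨ ∃ k, j = k + a :=
      (lt_or_ge j a).imp_right fun h => ⟨j - a, by omega⟩
    · have hMC : M j ≤ C :=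
        (single_le_sum (fun k _ => hM k) (mem_range.2 hj)).trans (le_add_of_nonneg_left zero_le_one)
      have hfac : 1 ≤ (j ! : ℝ) ^ ((c : ℝ) / a) :=
        Real.one_le_rpow (by exact_mod_cast j.factorial_pos) (by positivity)
      calc M j ≤ C * 1 * 1 := by simpa using hMC
        _ ≤ C * R ^ j * (j ! : ℝ) ^ ((c : ℝ) / a) := by gcongr; exact one_le_pow₀ hR
    · have hMk := ih k (by omega)
      have hMk0 := hM k
      calc M (k + a) ≤ K * ((k : ℝ) + 1) ^ c * M k := hstep k
        _ ≤ R ^ a * ((k : ℝ) + 1) ^ c * (C * R ^ k * (k ! : ℝ) ^ ((c : ℝ) / a)) := by gcongr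
        _ = C * R ^ (k + a) * (((k : ℝ) + 1) ^ c * (k ! : ℝ) ^ ((c : ℝ) / a)) := by ring
        _ ≤ C * R ^ (k + a) * ((k + a)! : ℝ) ^ ((c : ℝ) / a) := by
          gcongr
          exact succ_pow_mul_factorial_rpow_le ha c k

lemma GevreyFn.mono {s t : ℝ} (hst : s ≤ t) {F : ℕ → ℕ → ℂ} (h : GevreyFn s F) :
    GevreyFn t F := by
  obtain ⟨C, R, hC, hR, hF⟩ := h
  refine ⟨C, R, hC, hR, fun i j => (hF i j).trans ?_⟩
  gcongr
  exact_mod_cast j.factorial_pos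

lemma gevreyFn_of_norm_le {s C X Y : ℝ} {F : ℕ → ℕ → ℂ} (hC : 0 < C) (hX : 0 ≤ X) (hY : 0 ≤ Y)
    (hF : ∀ i j, ‖F i j‖ ≤ C * X ^ i * Y ^ j * (j ! : ℝ) ^ (s - 1)) : GevreyFn s F := by
  set R := max (max X Y) 1
  have hXR : X ≤ R := (le_max_left X Y).trans (le_max_left _ _)
  have hYR : Y ≤ R := (le_max_right X Y).trans (le_max_left _ _)
  refine ⟨C, R, hC, zero_lt_one.trans_le (le_max_right _ _), fun i j => (hF i j).trans ?_⟩
  rw [pow_add, ← mul_assoc]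
  gcongr

lemma M2.ext_co {f g : M2} (h : ∀ i j, co f i j = co g i j) : f = g := by
  refine MvPowerSeries.ext fun d => ?_
  have hd : d = Finsupp.single 0 (d 0) + Finsupp.single 1 (d 1) := by
    ext k
    fin_cases k <;> simp
  rw [hd]
  exact h (d 0) (d 1)

-- For a solution `f`, `rowCoeff a b β ε j i = f_{i,j} / f_{0,j}` (forced by `E_p f = 0`) and
-- `colCoeff a b β ε j = f_{0,j+a} / f_{0,j}` (forced by `(P f)_{(0,j)} = 0`).

def rowProd (a b : ℕ) (β : ℂ) (j n : ℕ) : ℂ :=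
  ∏ k ∈ range n, (β - ((a * k + b * j : ℕ) : ℂ))

def rowCoeff (a b : ℕ) (β ε : ℂ) (j i : ℕ) : ℂ :=
  rowProd a b β j i / (((a : ℂ) * ε) ^ i * (i ! : ℂ))

def colCoeff (a b : ℕ) (β ε : ℂ) (j : ℕ) : ℂ :=
  rowProd a b β j b / (((a : ℂ) * ε) ^ b * (((j + a)! / j ! : ℕ) : ℂ))

/-- The values `f_{0,j}` of the solution with initial data `f_{0,k} = v k` for `k < a`. -/
def colVal (a b : ℕ) (β ε : ℂ) (v : ℕ → ℂ) (j : ℕ) : ℂ :=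
  (∏ q ∈ range (j / a), colCoeff a b β ε (a * q + j % a)) * v (j % a)

def solOfInit (a b : ℕ) (β ε : ℂ) (v : ℕ → ℂ) : M2 :=
  fun d => rowCoeff a b β ε (d 1) (d 0) * colVal a b β ε v (d 1)

section Hypergeometric

variable {a b : ℕ} {β ε : ℂ}

lemma rowProd_b_add (j i : ℕ) :
    rowProd a b β j (b + i) = rowProd a b β j b * rowProd a b β (j + a) i := by
  simp only [rowProd, prod_range_add]
  congr 2 with k
  congr 2
  ring

lemma rowCoeff_zero (j : ℕ) : rowCoeff a b β ε j 0 = 1 := by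
  simp [rowCoeff, rowProd]

lemma rowCoeff_succ (ha : 0 < a) (hε : ε ≠ 0) (j i : ℕ) :
    (a : ℂ) * ε * ((i : ℂ) + 1) * rowCoeff a b β ε j (i + 1)
      = (β - ((a * i + b * j : ℕ) : ℂ)) * rowCoeff a b β ε j i := by
  have ha' : (a : ℂ) ≠ 0 := by exact_mod_cast ha.ne'
  simp only [rowCoeff, rowProd, prod_range_succ, pow_succ, Nat.factorial_succ]
  push_cast
  field_simp

lemma factorial_mul_rowCoeff_eq (j : ℕ) :
    (b ! : ℂ) * rowCoeff a b β ε j b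
      = (((j + a)! / j ! : ℕ) : ℂ) * colCoeff a b β ε j := by
  have hb : (b ! : ℂ) ≠ 0 := by exact_mod_cast b.factorial_ne_zero
  rw [rowCoeff, colCoeff, mul_comm, mul_comm _ (rowProd a b β j b / _), ← div_div, ← div_div,
    div_mul_cancel₀ _ hb, div_mul_cancel₀ _ (factorial_div_factorial_ne_zero j a)]

lemma factorial_div_mul_rowCoeff_add (ha : 0 < a) (hε : ε ≠ 0) (i j : ℕ) :
    (((i + b)! / i ! : ℕ) : ℂ) * rowCoeff a b β ε j (i + b)
      = (b ! : ℂ) * rowCoeff a b β ε j b * rowCoeff a b β ε (j + a) i := by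
  have ha' : (a : ℂ) ≠ 0 := by exact_mod_cast ha.ne'
  have hi : (i ! : ℂ) ≠ 0 := by exact_mod_cast i.factorial_ne_zero
  have hb : (b ! : ℂ) ≠ 0 := by exact_mod_cast b.factorial_ne_zero
  have hbi : ((b + i)! : ℂ) ≠ 0 := by exact_mod_cast (b + i).factorial_ne_zero
  rw [Nat.cast_div (Nat.factorial_dvd_factorial (Nat.le_add_right i b)) hi]
  simp only [rowCoeff, Nat.add_comm i b, rowProd_b_add, pow_add]
  field_simp

lemma norm_rowProd_le (j n : ℕ) :
    ‖rowProd a b β j n‖ ≤ ((a : ℝ) * n + b * j + ‖β‖) ^ n := by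
  rw [rowProd, norm_prod]
  refine (prod_le_prod (fun _ _ => norm_nonneg _) fun k hk => ?_).trans_eq
    (by rw [prod_const, card_range])
  have hk : (k : ℝ) ≤ n := by exact_mod_cast (mem_range.1 hk).le
  calc ‖β - ((a * k + b * j : ℕ) : ℂ)‖ ≤ ‖β‖ + ‖((a * k + b * j : ℕ) : ℂ)‖ := norm_sub_le _ _
    _ = (a : ℝ) * k + b * j + ‖β‖ := by rw [Complex.norm_natCast]; push_cast; ring
    _ ≤ (a : ℝ) * n + b * j + ‖β‖ := by gcongr

lemma norm_rowCoeff_le (ha : 0 < a) (hε : ε ≠ 0) (j i : ℕ) :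
    ‖rowCoeff a b β ε j i‖
      ≤ Real.exp ‖β‖ * (Real.exp a / (a * ‖ε‖)) ^ i * Real.exp b ^ j := by
  have hA : 0 < (a : ℝ) * ‖ε‖ := by positivity
  have hexp : Real.exp ((a : ℝ) * i + b * j + ‖β‖)
      = Real.exp ‖β‖ * Real.exp a ^ i * Real.exp b ^ j := by
    rw [← Real.exp_nat_mul, ← Real.exp_nat_mul, ← Real.exp_add, ← Real.exp_add]
    ring_nf
  rw [rowCoeff, norm_div, norm_mul, norm_pow, norm_mul, Complex.norm_natCast,
    Complex.norm_natCast]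
  calc ‖rowProd a b β j i‖ / (((a : ℝ) * ‖ε‖) ^ i * (i ! : ℝ))
      ≤ ((a : ℝ) * i + b * j + ‖β‖) ^ i / (i ! : ℝ) / ((a : ℝ) * ‖ε‖) ^ i := by
        rw [div_div, mul_comm (i ! : ℝ)]
        gcongr
        exact norm_rowProd_le j i
    _ ≤ Real.exp ((a : ℝ) * i + b * j + ‖β‖) / ((a : ℝ) * ‖ε‖) ^ i := by
        gcongr
        exact Real.pow_div_factorial_le_exp _ (by positivity) i
    _ = Real.exp ‖β‖ * (Real.exp a / (a * ‖ε‖)) ^ i * Real.exp b ^ j := by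
        rw [hexp, div_pow]
        ring

lemma norm_colCoeff_le (ha : 0 < a) (hab : a ≤ b) (hε : ε ≠ 0) (j : ℕ) :
    ‖colCoeff a b β ε j‖
      ≤ (((a : ℝ) * b + b + ‖β‖) / (a * ‖ε‖)) ^ b * ((j : ℝ) + 1) ^ (b - a) := by
  have hA : 0 < (a : ℝ) * ‖ε‖ := by positivity
  have hD : ((j : ℝ) + 1) ^ a ≤ (((j + a)! / j ! : ℕ) : ℝ) := by
    exact_mod_cast Nat.succ_pow_le_factorial_div_factorial j a
  have hX : (a : ℝ) * b + b * j + ‖β‖ ≤ ((a : ℝ) * b + b + ‖β‖) * ((j : ℝ) + 1) := by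
    have : (0 : ℝ) ≤ ((a : ℝ) * b + ‖β‖) * j := by positivity
    nlinarith
  rw [colCoeff, norm_div, norm_mul, norm_pow, norm_mul, Complex.norm_natCast,
    Complex.norm_natCast]
  calc ‖rowProd a b β j b‖ / (((a : ℝ) * ‖ε‖) ^ b * (((j + a)! / j ! : ℕ) : ℝ))
      ≤ (((a : ℝ) * b + b + ‖β‖) * ((j : ℝ) + 1)) ^ b
          / (((a : ℝ) * ‖ε‖) ^ b * ((j : ℝ) + 1) ^ a) := by
        gcongr
        exact (norm_rowProd_le j b).trans (by gcongr)
    _ = (((a : ℝ) * b + b + ‖β‖) / (a * ‖ε‖)) ^ b * ((j : ℝ) + 1) ^ (b - a) := by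
        rw [mul_pow, div_pow, ← pow_sub_mul_pow ((j : ℝ) + 1) hab]
        field_simp

lemma co_eq_rowCoeff_mul {f : M2} (ha : 0 < a) (hε : ε ≠ 0) (hE : ∀ i j, Epco a b β ε f i j = 0)
    (i j : ℕ) : co f i j = rowCoeff a b β ε j i * co f 0 j := by
  induction i with
  | zero => rw [rowCoeff_zero, one_mul]
  | succ i ih =>
    have hne : (a : ℂ) * ε * ((i : ℂ) + 1) ≠ 0 := by
      have : (a : ℂ) ≠ 0 := by exact_mod_cast ha.ne'
      exact mul_ne_zero (mul_ne_zero this hε) (Nat.cast_add_one_ne_zero i)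
    have hrow := rowCoeff_succ (b := b) (β := β) ha hε j i
    have hEij := hE i j
    rw [Epco] at hEij
    apply mul_left_cancel₀ hne
    linear_combination hEij + (β - ((a * i + b * j : ℕ) : ℂ)) * ih - co f 0 j * hrow

lemma co_zero_add_eq_colCoeff_mul {f : M2} (ha : 0 < a) (hε : ε ≠ 0)
    (hP : ∀ i j, Pco a b f i j = 0) (hE : ∀ i j, Epco a b β ε f i j = 0) (j : ℕ) :
    co f 0 (j + a) = colCoeff a b β ε j * co f 0 j := by
  have hP0 := hP 0 j
  simp only [Pco, zero_add, Nat.factorial_zero, Nat.div_one, co_eq_rowCoeff_mul ha hε hE b j]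
    at hP0
  apply mul_left_cancel₀ (factorial_div_factorial_ne_zero j a)
  linear_combination -hP0 + co f 0 j * factorial_mul_rowCoeff_eq (β := β) (ε := ε) j

variable {v : ℕ → ℂ}

lemma co_solOfInit (i j : ℕ) :
    co (solOfInit a b β ε v) i j = rowCoeff a b β ε j i * colVal a b β ε v j := by
  simp [co, solOfInit, MvPowerSeries.coeff_apply]

lemma colVal_of_lt {j : ℕ} (hj : j < a) : colVal a b β ε v j = v j := by
  simp [colVal, Nat.div_eq_of_lt hj, Nat.mod_eq_of_lt hj]

lemma colVal_add (ha : 0 < a) (j : ℕ) :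
    colVal a b β ε v (j + a) = colCoeff a b β ε j * colVal a b β ε v j := by
  rw [colVal, colVal, Nat.add_div_right j ha, Nat.add_mod_right, prod_range_succ,
    Nat.div_add_mod]
  ring

lemma epco_solOfInit (ha : 0 < a) (hε : ε ≠ 0) (i j : ℕ) :
    Epco a b β ε (solOfInit a b β ε v) i j = 0 := by
  rw [Epco, co_solOfInit, co_solOfInit]
  linear_combination colVal a b β ε v j * rowCoeff_succ (β := β) ha hε j i

lemma pco_solOfInit (ha : 0 < a) (hε : ε ≠ 0) (i j : ℕ) :
    Pco a b (solOfInit a b β ε v) i j = 0 := by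
  rw [Pco, co_solOfInit, co_solOfInit, colVal_add ha]
  linear_combination colVal a b β ε v j * (factorial_div_mul_rowCoeff_add (β := β) ha hε i j
    + rowCoeff a b β ε (j + a) i * factorial_mul_rowCoeff_eq (β := β) (ε := ε) j)

lemma eq_solOfInit {f : M2} (ha : 0 < a) (hε : ε ≠ 0)
    (hP : ∀ i j, Pco a b f i j = 0) (hE : ∀ i j, Epco a b β ε f i j = 0)
    (hv : ∀ k < a, co f 0 k = v k) : f = solOfInit a b β ε v := by
  have hcol : ∀ j, co f 0 j = colVal a b β ε v j := by
    intro j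
    induction j using Nat.strong_induction_on with
    | _ j ih =>
      obtain hj | ⟨k, rfl⟩ : j < a ∨ ∃ k, j = k + a :=
        (lt_or_ge j a).imp_right fun h => ⟨j - a, by omega⟩
      · rw [hv j hj, colVal_of_lt hj]
      · rw [co_zero_add_eq_colCoeff_mul ha hε hP hE, ih k (by omega), colVal_add ha]
  refine M2.ext_co fun i j => ?_
  rw [co_eq_rowCoeff_mul ha hε hE, hcol, co_solOfInit]

lemma gevreyFn_of_isSolution {f : M2} (ha : 0 < a) (hab : a ≤ b) (hε : ε ≠ 0)
    (hP : ∀ i j, Pco a b f i j = 0) (hE : ∀ i j, Epco a b β ε f i j = 0) :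
    GevreyFn ((b : ℝ) / (a : ℝ)) (co f) := by
  obtain ⟨C, R, hC, hR, hcol⟩ := exists_le_mul_pow_mul_factorial_rpow (M := fun j => ‖co f 0 j‖)
    ha (fun _ => norm_nonneg _) fun j => by
      rw [co_zero_add_eq_colCoeff_mul ha hε hP hE, norm_mul]
      gcongr
      exact norm_colCoeff_le ha hab hε j
  have hexp : (b : ℝ) / a - 1 = ((b - a : ℕ) : ℝ) / a := by
    rw [Nat.cast_sub hab]
    field_simp
  refine gevreyFn_of_norm_le (X := Real.exp a / (a * ‖ε‖)) (mul_pos (Real.exp_pos ‖β‖) hC)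
    (by positivity) (mul_pos (Real.exp_pos b) hR).le fun i j => ?_
  calc ‖co f i j‖ = ‖rowCoeff a b β ε j i‖ * ‖co f 0 j‖ := by
        rw [co_eq_rowCoeff_mul ha hε hE, norm_mul]
    _ ≤ (Real.exp ‖β‖ * (Real.exp a / (a * ‖ε‖)) ^ i * Real.exp b ^ j)
          * (C * R ^ j * (j ! : ℝ) ^ (((b - a : ℕ) : ℝ) / a)) := by
        gcongr
        · exact norm_rowCoeff_le ha hε j i
        · exact hcol j
    _ = Real.exp ‖β‖ * C * (Real.exp a / (a * ‖ε‖)) ^ i * (Real.exp b * R) ^ j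
          * (j ! : ℝ) ^ ((b : ℝ) / a - 1) := by
        rw [hexp, mul_pow]
        ring

def gSolPEquivInit (ha : 0 < a) (hab : a ≤ b) (hε : ε ≠ 0) {s : ℝ} (hs : (b : ℝ) / a ≤ s) :
    GSolP a b β ε s ≃ₗ[ℂ] (Fin a → ℂ) where
  toFun f k := co f 0 k
  map_add' f g := funext fun k => co_add f g 0 k
  map_smul' c f := funext fun k => co_smul c f 0 k
  invFun w :=
    let v : ℕ → ℂ := fun k => if hk : k < a then w ⟨k, hk⟩ else 0
    ⟨solOfInit a b β ε v,
      (gevreyFn_of_isSolution ha hab hε (pco_solOfInit ha hε) (epco_solOfInit ha hε)).mono hs,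
      pco_solOfInit ha hε, epco_solOfInit ha hε⟩
  left_inv f := Subtype.ext (eq_solOfInit ha hε f.2.2.1 f.2.2.2 fun k hk => by simp [hk]).symm
  right_inv w := funext fun k => by
    simp [co_solOfInit, rowCoeff_zero, colVal_of_lt k.isLt]

end Hypergeometric

theorem formal_solutions_are_gevrey_slope_and_dim_general
    (a b : ℕ) (ha : 0 < a) (haltb : a < b)
    (β : ℂ) (ε : ℂ) (hε : ε ≠ 0) :
    (∀ f : M2, (∀ i j : ℕ, Pco a b f i j = 0) → (∀ i j : ℕ, Epco a b β ε f i j = 0) →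
      GevreyFn ((b : ℝ) / (a : ℝ)) (co f)) ∧
    ∀ s : ℝ, (b : ℝ) / (a : ℝ) ≤ s → Module.rank ℂ (GSolP a b β ε s) = a :=
  ⟨fun _ hP hE => gevreyFn_of_isSolution ha haltb.le hε hP hE,
    fun _ hs => by rw [(gSolPEquivInit ha haltb.le hε hs).rank_eq, rank_fin_fun]⟩

/-- Every formal power series solution of the hypergeometric system at `p = (ε,0)`, `ε ≠ 0`,
is Gevrey of order `b/a`; consequently, for every real `s ≥ b/a`, the space of Gevrey-order-`s`
solutions has dimension `a`. -/
theorem formal_solutions_are_gevrey_slope_and_dim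
    (a b : ℕ) (hab : Nat.Coprime a b) (ha : 0 < a) (haltb : a < b)
    (β : ℂ) (ε : ℂ) (hε : ε ≠ 0) :
    (∀ f : M2, (∀ i j : ℕ, Pco a b f i j = 0) → (∀ i j : ℕ, Epco a b β ε f i j = 0) →
      GevreyFn ((b : ℝ) / (a : ℝ)) (co f)) ∧
    ∀ s : ℝ, (b : ℝ) / (a : ℝ) ≤ s → Module.rank ℂ (GSolP a b β ε s) = a :=
  formal_solutions_are_gevrey_slope_and_dim_general a b ha haltb β ε hε
end
end
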